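/- arXiv:1806.03012 — 7 statements merged into one kernel-verified Lean document; each statement's English description precedes it below -/
import Mathlib

section
/- Interchange law for block-permutation composition (the degreewise multiplication defines a map of operads 𝔖⋊𝔖 → 𝔖): for every n ∈ ℕ, every k : Fin n → ℕ, all permutations σ, τ of Fin n, and all permutations σᵢ, τᵢ of Fin (k i) (for each i : Fin n), one has γ(σ*τ; σ₁*τ₁, …, σₙ*τₙ) = γ'(σ; σ_{τ⁻¹(1)}, …, σ_{τ⁻¹(n)}) * γ(τ; τ₁, …, τₙ) as permutations of Fin (∑ i, k i), where * denotes composition of permutations (apply the right factor first), and γ' denotes the operadic composition formed with respect to the block sizes k ∘ τ⁻¹, transported to a permutation of Fin (∑ i, k i) along the equality ∑ j, k (τ⁻¹ j) = ∑ i, k i. -/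
/-- Splitting a sigma type over `Option`. -/
def sigmaOptionEquiv {γ : Type*} (β : Option γ → Type*) :
    (Σ o : Option γ, β o) ≃ (β none ⊕ Σ c : γ, β (some c)) where
  toFun := fun x => match x with
    | ⟨none, b⟩ => .inl b
    | ⟨some c, b⟩ => .inr ⟨c, b⟩
  invFun := fun x => match x with
    | .inl b => ⟨none, b⟩
    | .inr ⟨c, b⟩ => ⟨some c, b⟩
  left_inv := fun ⟨o, b⟩ => by cases o <;> rfl
  right_inv := fun x => by rcases x with b | ⟨c, b⟩ <;> rfl

/-- The order-preserving flattening equivalence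
`(Σ i : Fin n, Fin (k i)) ≃ Fin (∑ i, k i)`, listing the blocks in
increasing order of the index. -/
def blockFinSigmaFinEquiv : {n : ℕ} → {k : Fin n → ℕ} → (Σ i : Fin n, Fin (k i)) ≃ Fin (∑ i, k i)
  | 0, k => ((Equiv.equivOfIsEmpty (Σ i : Fin 0, Fin (k i)) (Fin 0)).trans
      (finCongr (show 0 = ∑ i : Fin 0, k i by simp)))
  | (n+1), k =>
    ((Equiv.sigmaCongrLeft (β := fun i => Fin (k i)) (finSuccEquiv n).symm).symm.trans
      ((sigmaOptionEquiv fun o => Fin (k ((finSuccEquiv n).symm o))).trans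
        ((Equiv.sumCongr (finCongr (congrArg k (finSuccEquiv_symm_none)))
            ((Equiv.sigmaCongrRight fun c =>
                finCongr (congrArg k (finSuccEquiv_symm_some c))).trans
              blockFinSigmaFinEquiv)).trans
          (finSumFinEquiv.trans (finCongr (Fin.sum_univ_succ k).symm)))))

/-- Block-permutation composition in the operad of symmetric groups. -/
def blockComp {n : ℕ} (k : Fin n → ℕ) (σ : Equiv.Perm (Fin n))
    (σs : ∀ i, Equiv.Perm (Fin (k i))) : Equiv.Perm (Fin (∑ i, k i)) :=
  blockFinSigmaFinEquiv.symm.trans <|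
    (Equiv.sigmaCongr σ fun i =>
        (σs i).trans (finCongr (congrArg k (σ.symm_apply_apply i).symm))).trans <|
      blockFinSigmaFinEquiv.trans (finCongr (Equiv.sum_comp σ.symm k))

theorem flatten_sum_eq {n : ℕ} (k : Fin n → ℕ) (l : ∀ i : Fin n, Fin (k i) → ℕ) :
    (∑ j : Fin (∑ i, k i), l (blockFinSigmaFinEquiv.symm j).1 (blockFinSigmaFinEquiv.symm j).2)
      = ∑ i, ∑ s, l i s := by
  rw [Fintype.sum_equiv blockFinSigmaFinEquiv.symm _ (fun a => l a.1 a.2) (fun _ => rfl)]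
  rw [← Finset.univ_sigma_univ, Finset.sum_sigma]

theorem perm_cast {n : ℕ} {k : Fin n → ℕ} (σs : ∀ i, Equiv.Perm (Fin (k i)))
    {i j : Fin n} (h : i = j) (x : Fin (k i)) :
    σs j (Fin.cast (congrArg k h) x) = Fin.cast (congrArg k h) (σs i x) := by
  subst h; rfl

/-- Interchange law for block-permutation composition: the degreewise
multiplication defines a map of operads `𝔖 ⋊ 𝔖 → 𝔖`. -/
theorem blockComp_mul {n : ℕ} (k : Fin n → ℕ) (σ τ : Equiv.Perm (Fin n))
    (σs τs : ∀ i, Equiv.Perm (Fin (k i))) :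
    blockComp k (σ * τ) (fun i => σs i * τs i)
      = (finCongr (Equiv.sum_comp τ.symm k)).permCongr
          (blockComp (fun j => k (τ.symm j)) σ (fun j => σs (τ.symm j)))
        * blockComp k τ τs := by
  apply Equiv.ext
  intro x
  simp only [blockComp, Equiv.Perm.mul_apply, Equiv.permCongr_apply, Equiv.trans_apply,
    finCongr_apply, Equiv.symm_apply_apply, Fin.cast_cast, Equiv.symm_symm,
    Equiv.sigmaCongr, finCongr_symm]
  rw [show ∀ h (y : Fin (∑ j, k (τ.symm j))), Fin.cast h y = y from fun _ _ => rfl]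
  rw [Equiv.symm_apply_apply]
  rcases hx : blockFinSigmaFinEquiv.symm x with ⟨i, s⟩
  simp only [Equiv.sigmaCongrLeft, Equiv.sigmaCongrRight, Equiv.coe_fn_mk, Equiv.trans_apply,
    finCongr_apply, Equiv.Perm.mul_apply]
  rw [perm_cast σs (τ.symm_apply_apply i).symm]
  rfl
end

section
/- Associativity of block-permutation composition (the family of symmetric groups forms an operad): for every n ∈ ℕ, k : Fin n → ℕ, a permutation σ of Fin n, permutations τᵢ of Fin (k i) for each i, a family of sizes l : (i : Fin n) → Fin (k i) → ℕ, and permutations ρ_{i,s} of Fin (l i s), one has γ(γ(σ; τ₁,…,τₙ); ρ) = γ(σ; γ(τ₁; ρ_{1,•}), …, γ(τₙ; ρ_{n,•})) as permutations of Fin (∑ i, ∑ s, l i s), where on the left the family ρ is indexed by Fin (∑ i, k i) via the order-preserving flattening (Σ i : Fin n, Fin (k i)) ≃ Fin (∑ i, k i) and the blocks are taken in that order, and the two sides are compared after the cast along the equality of the total sums. -/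
theorem fsfe_zero {n : ℕ} {k : Fin (n+1) → ℕ} (s : Fin (k 0)) :
    ((blockFinSigmaFinEquiv ⟨0, s⟩ : Fin (∑ i, k i)) : ℕ) = s := rfl

theorem fsfe_succ {n : ℕ} {k : Fin (n+1) → ℕ} (j : Fin n) (s : Fin (k j.succ)) :
    ((blockFinSigmaFinEquiv ⟨j.succ, s⟩ : Fin (∑ i, k i)) : ℕ)
      = k 0 + ((blockFinSigmaFinEquiv ⟨j, s⟩ : Fin (∑ i : Fin n, k i.succ)) : ℕ) := rfl

theorem finSigmaFinEquiv_val : ∀ {n : ℕ} {k : Fin n → ℕ} (a : Σ i : Fin n, Fin (k i)),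
    ((blockFinSigmaFinEquiv a : Fin (∑ i, k i)) : ℕ)
      = ∑ j ∈ Finset.univ.filter (fun j => j < a.1), k j + a.2
  | 0, _, a => a.1.elim0
  | (n+1), k, ⟨i, s⟩ => by
    induction i using Fin.cases with
    | zero =>
      dsimp only
      rw [fsfe_zero]
      have : Finset.univ.filter (fun j => j < (0 : Fin (n+1))) = ∅ := by
        ext j; simp [Fin.not_lt_zero]
      simp [this]
    | succ j =>
      dsimp only
      rw [fsfe_succ, finSigmaFinEquiv_val (k := fun i : Fin n => k i.succ) ⟨j, s⟩]
      have : ∑ j' ∈ Finset.univ.filter (fun j' => j' < j.succ), k j'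
          = k 0 + ∑ j' ∈ Finset.univ.filter (fun j' : Fin n => j' < j), k j'.succ := by
        rw [Finset.sum_filter, Finset.sum_filter, Fin.sum_univ_succ]
        simp [Fin.succ_lt_succ_iff, Fin.succ_pos]
      dsimp only at *
      rw [this]; omega

theorem blockComp_val {n : ℕ} (k : Fin n → ℕ) (σ : Equiv.Perm (Fin n))
    (σs : ∀ i, Equiv.Perm (Fin (k i))) (a : Σ i : Fin n, Fin (k i)) :
    ((blockComp k σ σs (blockFinSigmaFinEquiv a)) : ℕ)
      = ∑ j ∈ Finset.univ.filter (fun j => j < σ a.1), k (σ.symm j) + (σs a.1 a.2 : ℕ) := by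
  unfold blockComp
  simp only [Equiv.trans_apply, Equiv.symm_apply_apply, Equiv.sigmaCongr,
    Equiv.sigmaCongrRight, Equiv.sigmaCongrLeft, Equiv.coe_fn_mk, finCongr_apply,
    Fin.coe_cast]
  rw [finSigmaFinEquiv_val (k := fun j => k (σ.symm j))]
  rfl

theorem blockLt {n : ℕ} (k : Fin n → ℕ) (i i' : Fin n) (s s' : ℕ)
    (hs : s < k i) (hs' : s' < k i') :
    (∑ j ∈ Finset.univ.filter (fun j => j < i), k j) + s
        < (∑ j ∈ Finset.univ.filter (fun j => j < i'), k j) + s'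
      ↔ i < i' ∨ (i = i' ∧ s < s') := by
  have main : ∀ (a b : Fin n), a < b →
      (∑ j ∈ Finset.univ.filter (fun j => j < a), k j) + k a
        ≤ ∑ j ∈ Finset.univ.filter (fun j => j < b), k j := by
    intro a b hab
    have hsub : Finset.univ.filter (fun j => j < a) ∪ {a}
        ⊆ Finset.univ.filter (fun j => j < b) := by
      intro j hj
      simp only [Finset.mem_union, Finset.mem_filter, Finset.mem_singleton,
        Finset.mem_univ, true_and] at *
      rcases hj with hj | rfl
      · exact lt_trans hj hab
      · exact hab
    have := Finset.sum_le_sum_of_subset (f := k) hsub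
    rw [Finset.sum_union (by simp)] at this
    simpa using this
  rcases lt_trichotomy i i' with h | h | h
  · have := main i i' h
    simp only [h, true_or, iff_true]
    omega
  · subst h
    simp only [lt_irrefl, false_or, true_and]
    omega
  · have := main i' i h
    have h2 : ¬ i < i' := asymm h
    have h3 : i ≠ i' := ne_of_gt h
    simp only [h2, h3, false_or, false_and, iff_false, not_lt]
    omega

theorem sum_sigma_split {n : ℕ} {k : Fin n → ℕ} (g : ∀ i, Fin (k i) → ℕ)
    (C : (Σ i : Fin n, Fin (k i)) → Prop) [DecidablePred C]
    (P : Fin n → Prop) [DecidablePred P]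
    (i₀ : Fin n) (Q : Fin (k i₀) → Prop) [DecidablePred Q]
    (hP : ¬ P i₀)
    (h1 : ∀ a : Σ i : Fin n, Fin (k i), a.1 ≠ i₀ → (C a ↔ P a.1))
    (h2 : ∀ s, C ⟨i₀, s⟩ ↔ Q s) :
    ∑ a ∈ Finset.univ.filter C, g a.1 a.2
      = (∑ i ∈ Finset.univ.filter P, ∑ s, g i s)
        + ∑ s ∈ Finset.univ.filter Q, g i₀ s := by
  rw [Finset.sum_filter, ← Finset.univ_sigma_univ, Finset.sum_sigma,
    Finset.sum_filter]
  have key : ∀ i, (∑ s, if C ⟨i, s⟩ then g i s else 0)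
      = (if P i then ∑ s, g i s else 0)
        + (if i = i₀ then ∑ s ∈ Finset.univ.filter Q, g i₀ s else 0) := by
    intro i
    by_cases hi : i = i₀
    · subst hi
      rw [if_neg hP, if_pos rfl, zero_add, Finset.sum_filter]
      refine Finset.sum_congr rfl fun s _ => ?_
      by_cases h : Q s
      · rw [if_pos ((h2 s).mpr h), if_pos h]
      · rw [if_neg (fun c => h ((h2 s).mp c)), if_neg h]
    · rw [if_neg hi, add_zero]
      by_cases hp : P i
      · rw [if_pos hp]
        exact Finset.sum_congr rfl fun s _ => by
          rw [if_pos ((h1 ⟨i, s⟩ hi).mpr hp)]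
      · rw [if_neg hp]
        exact Finset.sum_eq_zero fun s _ => by
          rw [if_neg (fun hc => hp ((h1 ⟨i, s⟩ hi).mp hc))]
  simp_rw [key]
  rw [Finset.sum_add_distrib, Finset.sum_ite_eq' Finset.univ i₀]
  simp

/-- Associativity of block-permutation composition: the family of symmetric
groups forms an operad. -/
theorem blockComp_assoc {n : ℕ} (k : Fin n → ℕ) (σ : Equiv.Perm (Fin n))
    (τs : ∀ i, Equiv.Perm (Fin (k i)))
    (l : ∀ i : Fin n, Fin (k i) → ℕ)
    (ρ : ∀ (i : Fin n) (s : Fin (k i)), Equiv.Perm (Fin (l i s))) :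
    (finCongr (flatten_sum_eq k l)).permCongr
        (blockComp
          (fun j : Fin (∑ i, k i) =>
            l (blockFinSigmaFinEquiv.symm j).1 (blockFinSigmaFinEquiv.symm j).2)
          (blockComp k σ τs)
          (fun j => ρ (blockFinSigmaFinEquiv.symm j).1 (blockFinSigmaFinEquiv.symm j).2))
      = blockComp (fun i => ∑ s, l i s) σ
          (fun i => blockComp (l i) (τs i) (ρ i)) := by
  apply Equiv.ext
  intro x
  obtain ⟨⟨i, s, t⟩, rfl⟩ :=
    ((Equiv.sigmaCongrRight (fun i : Fin n => (blockFinSigmaFinEquiv :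
        (Σ s : Fin (k i), Fin (l i s)) ≃ Fin (∑ s, l i s)))).trans
      blockFinSigmaFinEquiv).surjective x
  simp only [Equiv.trans_apply, Equiv.sigmaCongrRight_apply]
  have hls : l i s
      = l (blockFinSigmaFinEquiv.symm (blockFinSigmaFinEquiv ⟨i, s⟩)).1
          (blockFinSigmaFinEquiv.symm (blockFinSigmaFinEquiv ⟨i, s⟩)).2 := by
    rw [Equiv.symm_apply_apply]
  have hy : (finCongr (flatten_sum_eq k l)).symm
        (blockFinSigmaFinEquiv ⟨i, blockFinSigmaFinEquiv ⟨s, t⟩⟩)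
      = blockFinSigmaFinEquiv (k := fun j => l (blockFinSigmaFinEquiv.symm j).1
          (blockFinSigmaFinEquiv.symm j).2) ⟨blockFinSigmaFinEquiv ⟨i, s⟩, Fin.cast hls t⟩ := by
    apply Fin.ext
    simp only [finCongr_symm, finCongr_apply, Fin.coe_cast]
    rw [finSigmaFinEquiv_val (k := fun i => ∑ s, l i s),
      finSigmaFinEquiv_val (k := fun j => l (blockFinSigmaFinEquiv.symm j).1
        (blockFinSigmaFinEquiv.symm j).2),
      finSigmaFinEquiv_val (k := l i)]
    have hstar : ∑ j ∈ Finset.univ.filter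
          (fun j => j < blockFinSigmaFinEquiv ⟨i, s⟩),
          l (blockFinSigmaFinEquiv.symm j).1 (blockFinSigmaFinEquiv.symm j).2
        = (∑ i' ∈ Finset.univ.filter (fun i' => i' < i), ∑ s', l i' s')
          + ∑ s' ∈ Finset.univ.filter
              (fun s' : Fin (k i) => (s' : ℕ) < (s : ℕ)), l i s' := by
      rw [← Finset.sum_equiv (blockFinSigmaFinEquiv (k := k))
        (t := Finset.univ.filter (fun j => j < blockFinSigmaFinEquiv ⟨i, s⟩))
        (g := fun j => l (blockFinSigmaFinEquiv.symm j).1 (blockFinSigmaFinEquiv.symm j).2)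
        (f := fun a => l a.1 a.2)
        (s := Finset.univ.filter (fun a : Σ i : Fin n, Fin (k i) =>
          a.1 < i ∨ (a.1 = i ∧ (a.2 : ℕ) < (s : ℕ))))
        (by
          intro a
          simp only [Finset.mem_filter, Finset.mem_univ, true_and, Fin.lt_def]
          rw [finSigmaFinEquiv_val a, finSigmaFinEquiv_val ⟨i, s⟩]
          dsimp only
          rw [blockLt k a.1 i a.2 s a.2.isLt s.isLt, Fin.lt_def])
        (fun a _ => congrArg (fun z : Σ i : Fin n, Fin (k i) => l z.1 z.2)
          (Equiv.symm_apply_apply _ _).symm)]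
      rw [sum_sigma_split (fun i' s' => l i' s') _ (fun i' => i' < i) i
        (fun s' => (s' : ℕ) < (s : ℕ)) (lt_irrefl i)
        (by
          rintro ⟨a1, a2⟩ ha
          dsimp only
          constructor
          · rintro (h | ⟨rfl, h⟩)
            · exact h
            · exact absurd rfl ha
          · exact fun h => Or.inl h)
        (fun s' => by simp)]
    simp only [Fin.lt_def, Fin.coe_cast] at hstar ⊢
    omega
  rw [Equiv.permCongr_apply, hy]
  apply Fin.ext
  rw [finCongr_apply, Fin.coe_cast,
    blockComp_val _ (blockComp k σ τs) _ ⟨blockFinSigmaFinEquiv ⟨i, s⟩, Fin.cast hls t⟩,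
    blockComp_val (fun i => ∑ s, l i s) σ _ ⟨i, blockFinSigmaFinEquiv ⟨s, t⟩⟩,
    blockComp_val (l i) (τs i) (ρ i) ⟨s, t⟩]
  dsimp only
  have hrho : ∀ (X : Σ i : Fin n, Fin (k i)) (hX : X = ⟨i, s⟩)
      (hlsX : l i s = l X.1 X.2),
      ((ρ X.1 X.2 (Fin.cast hlsX t) : Fin _) : ℕ) = ((ρ i s t : Fin _) : ℕ) := by
    rintro X rfl _
    rfl
  rw [hrho (blockFinSigmaFinEquiv.symm (blockFinSigmaFinEquiv ⟨i, s⟩))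
    (Equiv.symm_apply_apply _ _) hls]
  have hbig : ∑ j ∈ Finset.filter
        (fun j => j < (blockComp k σ τs) (blockFinSigmaFinEquiv ⟨i, s⟩)) Finset.univ,
        l (blockFinSigmaFinEquiv.symm ((Equiv.symm (blockComp k σ τs)) j)).fst
          (blockFinSigmaFinEquiv.symm ((Equiv.symm (blockComp k σ τs)) j)).snd
      = (∑ i' ∈ Finset.univ.filter (fun i' => σ i' < σ i), ∑ s', l i' s')
        + ∑ s' ∈ Finset.univ.filter
            (fun s' : Fin (k i) => ((τs i s' : Fin _) : ℕ) < ((τs i s : Fin _) : ℕ)),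
            l i s' := by
    rw [← Finset.sum_equiv ((blockFinSigmaFinEquiv (k := k)).trans
        (blockComp k σ τs : Equiv.Perm (Fin (∑ i, k i))))
      (t := Finset.filter
        (fun j => j < (blockComp k σ τs) (blockFinSigmaFinEquiv ⟨i, s⟩)) Finset.univ)
      (g := fun j => l (blockFinSigmaFinEquiv.symm ((Equiv.symm (blockComp k σ τs)) j)).fst
          (blockFinSigmaFinEquiv.symm ((Equiv.symm (blockComp k σ τs)) j)).snd)
      (f := fun a => l a.1 a.2)
      (s := Finset.univ.filter (fun a : Σ i : Fin n, Fin (k i) =>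
        σ a.1 < σ i ∨ (a.1 = i ∧ ((τs a.1 a.2 : Fin _) : ℕ) < ((τs i s : Fin _) : ℕ))))
      (by
        intro a
        simp only [Finset.mem_filter, Finset.mem_univ, true_and, Equiv.trans_apply,
          Fin.lt_def]
        rw [blockComp_val k σ τs a, blockComp_val k σ τs ⟨i, s⟩]
        dsimp only
        rw [blockLt (fun j => k (σ.symm j)) (σ a.1) (σ i) _ _
          (by simpa using (τs a.1 a.2).isLt) (by simpa using (τs i s).isLt)]
        simp [Equiv.apply_eq_iff_eq])
      (fun a _ => congrArg (fun z : Σ i : Fin n, Fin (k i) => l z.1 z.2)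
        (by rw [Equiv.trans_apply, Equiv.symm_apply_apply, Equiv.symm_apply_apply]))]
    rw [sum_sigma_split (fun i' s' => l i' s') _ (fun i' => σ i' < σ i) i
      (fun s' : Fin (k i) => ((τs i s' : Fin _) : ℕ) < ((τs i s : Fin _) : ℕ))
      (lt_irrefl (σ i))
      (by
        rintro ⟨a1, a2⟩ ha
        dsimp only
        constructor
        · rintro (h | ⟨rfl, h⟩)
          · exact h
          · exact absurd rfl ha
        · exact fun h => Or.inl h)
      (fun s' => by simp)]
  rw [hbig]
  have hsum1 : ∑ j ∈ Finset.filter (fun j => j < σ i) Finset.univ,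
        ∑ s' : Fin (k (σ.symm j)), l (σ.symm j) s'
      = ∑ i' ∈ Finset.univ.filter (fun i' => σ i' < σ i), ∑ s', l i' s' := by
    rw [← Finset.sum_equiv σ
      (t := Finset.filter (fun j => j < σ i) Finset.univ)
      (g := fun j => ∑ s' : Fin (k (σ.symm j)), l (σ.symm j) s')
      (f := fun i' => ∑ s', l i' s')
      (s := Finset.univ.filter (fun i' => σ i' < σ i))
      (by intro a; simp)
      (fun a _ => congrArg (fun z => ∑ s' : Fin (k z), l z s')
        (σ.symm_apply_apply a).symm)]
  have hsum2 : ∑ j ∈ Finset.filter (fun j => j < τs i s) Finset.univ,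
        l i ((τs i).symm j)
      = ∑ s' ∈ Finset.univ.filter
          (fun s' : Fin (k i) => ((τs i s' : Fin _) : ℕ) < ((τs i s : Fin _) : ℕ)),
          l i s' := by
    rw [← Finset.sum_equiv (τs i : Equiv.Perm (Fin (k i)))
      (t := Finset.filter (fun j => j < τs i s) Finset.univ)
      (g := fun j => l i ((τs i).symm j))
      (f := fun s' => l i s')
      (s := Finset.univ.filter
        (fun s' : Fin (k i) => ((τs i s' : Fin _) : ℕ) < ((τs i s : Fin _) : ℕ)))
      (by
        intro a
        simp only [Finset.mem_filter, Finset.mem_univ, true_and, Fin.lt_def])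
      (fun a _ => by
        show l i a = l i ((τs i).symm ((τs i) a))
        rw [Equiv.symm_apply_apply])]
  rw [hsum1, hsum2]
  omega
end

section
/- Total category of a crossed group: let 𝒜 be a category and G a crossed 𝒜-group. Then the following data define a category 𝒜_G: the objects are those of 𝒜; the hom-set 𝒜_G(a, b) is 𝒜(a, b) × G(a); the composition of (φ, x) : a → b and (ψ, y) : c → a is (φ ∘ ψˣ, ψ*(x) · y) : c → b; and the identity on a is (id_a, e). That is, this composition is associative and the pairs (id_a, e) are two-sided identities for it. -/
open CategoryTheory

/-- A crossed `𝒜`-group: a presheaf of groups-as-sets `G` on `𝒜` (with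
restriction maps `res`), together with a left action of `G a` on each hom-set
`𝒜(b, a)`, subject to the crossed-group axioms. -/
structure CrossedGroup (𝒜 : Type*) [Category 𝒜] (G : 𝒜 → Type*)
    [∀ a, Group (G a)] where
  /-- the restriction map `φ* : G a → G b` for `φ : b ⟶ a` -/
  res : ∀ {a b : 𝒜}, (b ⟶ a) → G a → G b
  res_id : ∀ {a : 𝒜} (x : G a), res (𝟙 a) x = x
  res_comp : ∀ {a b c : 𝒜} (φ : b ⟶ a) (ψ : c ⟶ b) (x : G a),
    res (ψ ≫ φ) x = res ψ (res φ x)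
  /-- the left action `(x, φ) ↦ φˣ` of `G a` on `𝒜(b, a)` -/
  act : ∀ {a b : 𝒜}, G a → (b ⟶ a) → (b ⟶ a)
  act_one : ∀ {a b : 𝒜} (φ : b ⟶ a), act (1 : G a) φ = φ
  act_mul : ∀ {a b : 𝒜} (x y : G a) (φ : b ⟶ a), act (x * y) φ = act x (act y φ)
  act_id : ∀ {a : 𝒜} (x : G a), act x (𝟙 a) = 𝟙 a
  /-- axiom (i): `(φ ∘ ψ)ˣ = φˣ ∘ ψ^{φ*(x)}` -/
  act_comp : ∀ {a b c : 𝒜} (φ : b ⟶ a) (ψ : c ⟶ b) (x : G a),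
    act x (ψ ≫ φ) = act (res φ x) ψ ≫ act x φ
  /-- axiom (ii): `φ*(x·y) = (φʸ)*(x) · φ*(y)` -/
  res_mul : ∀ {a b : 𝒜} (φ : b ⟶ a) (x y : G a),
    res φ (x * y) = res (act y φ) x * res φ y

/-- The composition in the total category `𝒜_G`: the composite of
`(φ, x) : a → b` with `(ψ, y) : c → a` is `(φ ∘ ψˣ, ψ*(x) · y) : c → b`. -/
def CrossedGroup.tcomp {𝒜 : Type*} [Category 𝒜] {G : 𝒜 → Type*}
    [∀ a, Group (G a)] (C : CrossedGroup 𝒜 G) {a b c : 𝒜}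
    (p : (a ⟶ b) × G a) (q : (c ⟶ a) × G c) : (c ⟶ b) × G c :=
  (C.act p.2 q.1 ≫ p.1, C.res q.1 p.2 * q.2)

theorem CrossedGroup.res_one {𝒜 : Type*} [Category 𝒜] {G : 𝒜 → Type*}
    [∀ a, Group (G a)] (C : CrossedGroup 𝒜 G) {a b : 𝒜} (φ : b ⟶ a) :
    C.res φ (1 : G a) = 1 := by
  have h := C.res_mul φ 1 1
  rw [mul_one, C.act_one] at h
  exact right_eq_mul.mp h

/-- Total category of a crossed group: the composition of the total category
`𝒜_G` is associative and the pairs `(𝟙 a, 1)` are two-sided identities. -/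
theorem crossedGroup_total_category {𝒜 : Type*} [Category 𝒜] (G : 𝒜 → Type*)
    [∀ a, Group (G a)] (C : CrossedGroup 𝒜 G) :
    (∀ {a b c d : 𝒜} (p : (a ⟶ b) × G a) (q : (c ⟶ a) × G c)
        (r : (d ⟶ c) × G d),
      C.tcomp (C.tcomp p q) r = C.tcomp p (C.tcomp q r))
    ∧ (∀ {a b : 𝒜} (p : (a ⟶ b) × G a), C.tcomp p (𝟙 a, (1 : G a)) = p)
    ∧ (∀ {a b : 𝒜} (p : (a ⟶ b) × G a), C.tcomp (𝟙 b, (1 : G b)) p = p) := by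
  refine ⟨fun p q r => ?_, fun p => ?_, fun p => ?_⟩
  · simp [CrossedGroup.tcomp, C.act_comp, C.act_mul, C.res_comp, C.res_mul,
      mul_assoc, Category.assoc]
  · simp [CrossedGroup.tcomp, C.act_id, C.res_id]
  · simp [CrossedGroup.tcomp, C.act_one, C.res_id, C.res_one]
end

section
/- Properties of dissociated morphisms in ∇: (1) if φ₁ : ⟪n⟫ → ⟪k₁⟫ and φ₂ : ⟪n⟫ → ⟪k₂⟫ are morphisms of ∇ with unique factorizations φ₁ = μ₁ ∘ ρ₁ and φ₂ = μ₂ ∘ ρ₂ into inert morphisms ρᵢ followed by active morphisms μᵢ, then φ₁ and φ₂ are dissociated if and only if ρ₁ and ρ₂ are dissociated; (2) if φ₁ and φ₂ are dissociated, then for every morphism ψ : ⟪l⟫ → ⟪n⟫ of ∇, the composites φ₁ ∘ ψ and φ₂ ∘ ψ are dissociated. -/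
/-- A morphism `⟪m⟫ → ⟪n⟫` of the category `∇` of intervals: a monotone map
`Fin (m+2) → Fin (n+2)` preserving the bottom and top elements. -/
structure IntervalHom (m n : ℕ) where
  toFun : Fin (m + 2) → Fin (n + 2)
  mono : Monotone toFun
  map_bot : toFun ⊥ = ⊥
  map_top : toFun ⊤ = ⊤

/-- The identity morphism of `∇`. -/
def IntervalHom.id (n : ℕ) : IntervalHom n n :=
  ⟨fun i => i, monotone_id, rfl, rfl⟩

/-- Composition in `∇` (`φ.comp ψ` is `φ ∘ ψ`). -/
def IntervalHom.comp {l m n : ℕ} (φ : IntervalHom m n) (ψ : IntervalHom l m) :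
    IntervalHom l n :=
  ⟨fun i => φ.toFun (ψ.toFun i), φ.mono.comp ψ.mono,
    by show φ.toFun (ψ.toFun ⊥) = ⊥; rw [ψ.map_bot, φ.map_bot],
    by show φ.toFun (ψ.toFun ⊤) = ⊤; rw [ψ.map_top, φ.map_top]⟩

/-- The interior `{1, …, n}` of the interval `⟪n⟫`. -/
def intervalInterior (n : ℕ) : Set (Fin (n + 2)) := {j | j ≠ ⊥ ∧ j ≠ ⊤}

/-- A morphism `φ` of `∇` is active if `φ⁻¹{⊥, ⊤} = {⊥, ⊤}`. -/
def IntervalHom.Active {m n : ℕ} (φ : IntervalHom m n) : Prop :=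
  ∀ i : Fin (m + 2), φ.toFun i = ⊥ ∨ φ.toFun i = ⊤ → i = ⊥ ∨ i = ⊤

/-- A morphism `φ` of `∇` is inert if it restricts to a bijection from
`φ⁻¹({1,…,n})` onto the interior `{1,…,n}`. -/
def IntervalHom.Inert {m n : ℕ} (φ : IntervalHom m n) : Prop :=
  Set.BijOn φ.toFun (φ.toFun ⁻¹' intervalInterior n) (intervalInterior n)

/-- Two morphisms `φ₁, φ₂` of `∇` with common domain are dissociated if every
interior element is sent to an endpoint by `φ₁` or by `φ₂`. -/
def IntervalHom.Dissociated {n k₁ k₂ : ℕ} (φ₁ : IntervalHom n k₁)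
    (φ₂ : IntervalHom n k₂) : Prop :=
  ∀ i : Fin (n + 2), i ≠ ⊥ ∧ i ≠ ⊤ →
    (φ₁.toFun i = ⊥ ∨ φ₁.toFun i = ⊤) ∨ (φ₂.toFun i = ⊥ ∨ φ₂.toFun i = ⊤)

/-- Properties of dissociated morphisms in `∇`: dissociativity only depends on
the inert parts of the inert–active factorizations, and is stable under
precomposition. -/
theorem intervalHom_dissociated_props {n k₁ k₂ a₁ a₂ : ℕ}
    (φ₁ : IntervalHom n k₁) (φ₂ : IntervalHom n k₂)
    (ρ₁ : IntervalHom n a₁) (μ₁ : IntervalHom a₁ k₁)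
    (ρ₂ : IntervalHom n a₂) (μ₂ : IntervalHom a₂ k₂)
    (hρ₁ : ρ₁.Inert) (hμ₁ : μ₁.Active) (h₁ : φ₁ = μ₁.comp ρ₁)
    (hρ₂ : ρ₂.Inert) (hμ₂ : μ₂.Active) (h₂ : φ₂ = μ₂.comp ρ₂) :
    (φ₁.Dissociated φ₂ ↔ ρ₁.Dissociated ρ₂)
    ∧ (∀ {l : ℕ} (ψ : IntervalHom l n), φ₁.Dissociated φ₂ →
        (φ₁.comp ψ).Dissociated (φ₂.comp ψ)) := by
  subst h₁ h₂
  have key : ∀ {a k : ℕ} (ρ : IntervalHom n a) (μ : IntervalHom a k), μ.Active →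
      ∀ i, ((μ.comp ρ).toFun i = ⊥ ∨ (μ.comp ρ).toFun i = ⊤) ↔
        (ρ.toFun i = ⊥ ∨ ρ.toFun i = ⊤) := by
    intro a k ρ μ hμ i
    constructor
    · intro h; exact hμ _ h
    · rintro (h | h) <;> simp only [IntervalHom.comp, h]
      · exact Or.inl μ.map_bot
      · exact Or.inr μ.map_top
  constructor
  · constructor
    · intro h i hi
      rcases h i hi with h' | h'
      · exact Or.inl ((key ρ₁ μ₁ hμ₁ i).mp h')
      · exact Or.inr ((key ρ₂ μ₂ hμ₂ i).mp h')
    · intro h i hi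
      rcases h i hi with h' | h'
      · exact Or.inl ((key ρ₁ μ₁ hμ₁ i).mpr h')
      · exact Or.inr ((key ρ₂ μ₂ hμ₂ i).mpr h')
  · intro l ψ h i hi
    by_cases hb : ψ.toFun i = ⊥
    · left; left
      show (μ₁.comp ρ₁).toFun (ψ.toFun i) = ⊥
      rw [hb]; exact (μ₁.comp ρ₁).map_bot
    by_cases ht : ψ.toFun i = ⊤
    · left; right
      show (μ₁.comp ρ₁).toFun (ψ.toFun i) = ⊤
      rw [ht]; exact (μ₁.comp ρ₁).map_top
    exact h (ψ.toFun i) ⟨hb, ht⟩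
end

section
/- Duality for paracyclic operators: let f : ℤ → ℤ be a paracyclic operator of type (m, n). Then for every j ∈ ℤ the set {i ∈ ℤ | j ≤ f(i)} is nonempty and bounded below, so f̄(j) := min{i ∈ ℤ | j ≤ f(i)} is well defined; moreover f̄ is monotone, satisfies f̄(j + n + 1) = f̄(j) + m + 1 for all j (so f̄ is a paracyclic operator of type (n, m)), and satisfies the Galois property: for all i, j ∈ ℤ, f̄(j) ≤ i if and only if j ≤ f(i). -/
/-- A paracyclic operator of type `(m, n)`: a monotone function `ℤ → ℤ` with
`f (i + m + 1) = f i + n + 1` for all `i`. These are the morphisms `m → n` of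
the paracyclic category `Λ∞`. -/
def IsParacyclic (m n : ℕ) (f : ℤ → ℤ) : Prop :=
  Monotone f ∧ ∀ i : ℤ, f (i + m + 1) = f i + n + 1

/-- The dual `f̄` of a paracyclic operator: `f̄ j = min {i | j ≤ f i}`. -/
noncomputable def pdual (f : ℤ → ℤ) : ℤ → ℤ := fun j => sInf {i : ℤ | j ≤ f i}

lemma paracyclic_iter (m n : ℕ) (f : ℤ → ℤ) (hf : IsParacyclic m n f) :
    ∀ k : ℤ, ∀ i : ℤ, f (i + k * (m + 1)) = f i + k * (n + 1) := by
  intro k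
  induction k using Int.induction_on with
  | zero => intro i; simp
  | succ k ih =>
    intro i
    have := hf.2 (i + k * (m + 1))
    have h2 := ih i
    push_cast at *
    rw [show i + (k + 1) * ((m : ℤ) + 1) = i + k * (m + 1) + m + 1 by ring, this, h2]
    ring
  | pred k ih =>
    intro i
    have := hf.2 (i + (-(k : ℤ) - 1) * (m + 1))
    have h2 := ih i
    push_cast at *
    rw [show i + (-(k:ℤ) - 1) * ((m:ℤ) + 1) + m + 1 = i + -(k:ℤ) * (m + 1) by ring, h2] at this
    linarith

/-- Duality for paracyclic operators: for a paracyclic operator `f` of type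
`(m, n)`, the sets `{i | j ≤ f i}` are nonempty and bounded below (so the
minimum `f̄ j` is well defined), `f̄` is a monotone paracyclic operator of type
`(n, m)`, and `f̄` satisfies the Galois property. -/
theorem paracyclic_dual (m n : ℕ) (f : ℤ → ℤ) (hf : IsParacyclic m n f) :
    (∀ j : ℤ, {i : ℤ | j ≤ f i}.Nonempty ∧ BddBelow {i : ℤ | j ≤ f i})
    ∧ (∀ j : ℤ, IsLeast {i : ℤ | j ≤ f i} (pdual f j))
    ∧ Monotone (pdual f)
    ∧ IsParacyclic n m (pdual f)
    ∧ (∀ i j : ℤ, pdual f j ≤ i ↔ j ≤ f i) := by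
  have hiter := paracyclic_iter m n f hf
  have hmono := hf.1
  have hne : ∀ j : ℤ, {i : ℤ | j ≤ f i}.Nonempty := by
    intro j
    refine ⟨max 0 (j - f 0) * (m + 1), ?_⟩
    have := hiter (max 0 (j - f 0)) 0
    simp only [zero_add] at this
    have h1 : max 0 (j - f 0) ≤ max 0 (j - f 0) * ((n : ℤ) + 1) := by
      nlinarith [le_max_left 0 (j - f 0), Int.natCast_nonneg n]
    simp only [Set.mem_setOf_eq, this]
    have := le_max_right 0 (j - f 0)
    linarith
  have hbdd : ∀ j : ℤ, BddBelow {i : ℤ | j ≤ f i} := by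
    intro j
    set k : ℤ := -(max 0 (f 0 - j + 1))
    have hk0 : k ≤ 0 := by simp [k]
    have hflt : f (k * (m + 1)) < j := by
      have := hiter k 0
      simp only [zero_add] at this
      have h1 : k * ((n : ℤ) + 1) ≤ k := by
        nlinarith [Int.natCast_nonneg n]
      have h2 : f 0 - j + 1 ≤ max 0 (f 0 - j + 1) := le_max_right _ _
      rw [this]
      simp only [k] at *
      linarith
    refine ⟨k * (m + 1), fun i hi => ?_⟩
    by_contra h
    push_neg at h
    exact absurd (le_trans hi (hmono h.le)) (not_le.mpr hflt)
  have hleast : ∀ j : ℤ, IsLeast {i : ℤ | j ≤ f i} (pdual f j) :=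
    fun j => ⟨Int.csInf_mem (hne j) (hbdd j), fun x hx => csInf_le (hbdd j) hx⟩
  have hgal : ∀ i j : ℤ, pdual f j ≤ i ↔ j ≤ f i := by
    intro i j
    constructor
    · intro h
      exact le_trans (hleast j).1 (hmono h)
    · intro h
      exact csInf_le (hbdd j) h
  have hmono' : Monotone (pdual f) := by
    intro j j' hjj'
    rw [hgal]
    exact le_trans hjj' (hleast j').1
  refine ⟨fun j => ⟨hne j, hbdd j⟩, hleast, hmono', ⟨hmono', fun j => ?_⟩, hgal⟩
  have h1 : pdual f (j + n + 1) ≤ pdual f j + m + 1 := by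
    rw [hgal]
    have := hf.2 (pdual f j)
    rw [show pdual f j + (m : ℤ) + 1 = pdual f j + m + 1 by ring, this]
    have := (hleast j).1
    simp only [Set.mem_setOf_eq] at this
    linarith
  have h2 : pdual f j ≤ pdual f (j + n + 1) - m - 1 := by
    rw [hgal]
    have hkey := hf.2 (pdual f (j + n + 1) - m - 1)
    rw [show pdual f (j + (n:ℤ) + 1) - m - 1 + m + 1 = pdual f (j + n + 1) by ring] at hkey
    have := (hleast (j + n + 1)).1
    simp only [Set.mem_setOf_eq] at this
    linarith
  omega
end

section
/- Contravariant functoriality of the paracyclic duality: the assignment f ↦ f̄, where f̄(j) := min{i ∈ ℤ | j ≤ f(i)}, sends the identity function ℤ → ℤ (a paracyclic operator of type (m, m)) to the identity function, and for all paracyclic operators f of type (m, n) and g of type (n, p), the composite g ∘ f is a paracyclic operator of type (m, p) and satisfies (g ∘ f)‾ = f̄ ∘ ḡ. -/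
lemma paracyclic_shift {m n : ℕ} {f : ℤ → ℤ} (hf : IsParacyclic m n f) :
    ∀ k : ℤ, f (k * (m + 1)) = f 0 + k * (n + 1) := by
  intro k
  induction k using Int.induction_on with
  | zero => simp
  | succ k ih =>
      have := hf.2 (k * (m + 1))
      push_cast at this ⊢
      rw [show ((k : ℤ) + 1) * (m + 1) = k * (m + 1) + m + 1 by ring, this, ih]
      ring
  | pred k ih =>
      have := hf.2 ((-k - 1) * (m + 1))
      rw [show ((-k - 1) * (m + 1) + m + 1 : ℤ) = -k * (m + 1) by ring] at this
      push_cast at this ih ⊢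
      rw [show ((-(k : ℤ) - 1) * (m + 1)) = (-k - 1) * (m + 1) by ring]
      linear_combination ih - this

lemma paracyclic_nonempty {m n : ℕ} {f : ℤ → ℤ} (hf : IsParacyclic m n f) (j : ℤ) :
    {i : ℤ | j ≤ f i}.Nonempty := by
  refine ⟨(max 0 (j - f 0)) * (m + 1), ?_⟩
  have h := paracyclic_shift hf (max 0 (j - f 0))
  simp only [Set.mem_setOf_eq, h]
  nlinarith [le_max_left 0 (j - f 0), le_max_right 0 (j - f 0)]

lemma paracyclic_bddBelow {m n : ℕ} {f : ℤ → ℤ} (hf : IsParacyclic m n f) (j : ℤ) :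
    BddBelow {i : ℤ | j ≤ f i} := by
  set k : ℤ := min 0 (j - f 0 - 1) with hk
  refine ⟨k * (m + 1), fun i hi => ?_⟩
  by_contra h
  push_neg at h
  have hmono := hf.1 (le_of_lt h)
  have hs := paracyclic_shift hf k
  have hk0 : k ≤ 0 := min_le_left _ _
  have hk1 : k ≤ j - f 0 - 1 := min_le_right _ _
  have : f (k * (m + 1)) < j := by nlinarith
  simp only [Set.mem_setOf_eq] at hi
  omega

lemma pdual_galois {m n : ℕ} {f : ℤ → ℤ} (hf : IsParacyclic m n f) (j i : ℤ) :
    pdual f j ≤ i ↔ j ≤ f i := by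
  have hne := paracyclic_nonempty hf j
  have hbdd := paracyclic_bddBelow hf j
  constructor
  · intro h
    have hmem : pdual f j ∈ {i : ℤ | j ≤ f i} := Int.csInf_mem hne hbdd
    exact le_trans hmem (hf.1 h)
  · intro h
    exact csInf_le hbdd h

/-- Contravariant functoriality of the paracyclic duality: the dual of the
identity is the identity, and the dual of a composite of paracyclic operators
is the composite of the duals in the opposite order. -/
theorem paracyclic_dual_functorial :
    (∀ m : ℕ, IsParacyclic m m (fun i : ℤ => i)
      ∧ pdual (fun i : ℤ => i) = fun i : ℤ => i)
    ∧ ∀ (m n p : ℕ) (f g : ℤ → ℤ),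
        IsParacyclic m n f → IsParacyclic n p g →
          IsParacyclic m p (g ∘ f) ∧ pdual (g ∘ f) = pdual f ∘ pdual g := by
  constructor
  · intro m
    refine ⟨⟨monotone_id, fun i => rfl⟩, ?_⟩
    funext j
    show sInf {i : ℤ | j ≤ i} = j
    rw [show {i : ℤ | j ≤ i} = Set.Ici j from rfl, csInf_Ici]
  · intro m n p f g hf hg
    have hgf : IsParacyclic m p (g ∘ f) := by
      refine ⟨hg.1.comp hf.1, fun i => ?_⟩
      simp only [Function.comp_apply, hf.2 i]
      have := hg.2 (f i)
      simpa using this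
    refine ⟨hgf, ?_⟩
    funext j
    have key : ∀ i : ℤ, pdual (g ∘ f) j ≤ i ↔ pdual f (pdual g j) ≤ i := by
      intro i
      rw [pdual_galois hgf, pdual_galois hf, pdual_galois hg]
      rfl
    exact le_antisymm ((key _).mpr le_rfl) ((key _).mp le_rfl)
end

section
/- Composition formula for partition vectors of morphisms of ∇: let φ : ⟪m⟫ → ⟪n⟫ and ψ : ⟪l⟫ → ⟪m⟫ be morphisms of ∇. Then for every interior element j ∈ {1,…,n}, k^{(φ∘ψ)}_j = ∑_{i ∈ φ⁻¹{j}} k^{(ψ)}_i, and for each endpoint j ∈ {⊥, ⊤}, k^{(φ∘ψ)}_j = k^{(ψ)}_j + ∑_{i ∈ φ⁻¹{j} ∩ {1,…,m}} k^{(ψ)}_i. -/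
/-- The partition vector `k^{(φ)}` of a morphism `φ : ⟪m⟫ → ⟪n⟫` of `∇`. -/
noncomputable def kvec {m n : ℕ} (φ : IntervalHom m n) : Fin (n + 2) → ℕ := fun j =>
  if j = ⊥ ∨ j = ⊤ then (Finset.univ.filter fun i => φ.toFun i = j).card - 1
  else (Finset.univ.filter fun i => φ.toFun i = j).card

open Finset in
private lemma kvec_card_comp {l m n : ℕ} (φ : IntervalHom m n) (ψ : IntervalHom l m)
    (j : Fin (n+2)) :
    (univ.filter fun i => φ.toFun (ψ.toFun i) = j).card
      = ∑ b ∈ univ.filter (fun b => φ.toFun b = j),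
          (univ.filter fun i => ψ.toFun i = b).card := by
  rw [Finset.card_eq_sum_card_fiberwise (f := ψ.toFun)
      (t := univ.filter fun b => φ.toFun b = j)
      (fun x hx => by simpa using (Finset.mem_filter.mp hx).2)]
  refine Finset.sum_congr rfl fun b hb => ?_
  congr 1
  ext i
  simp only [Finset.mem_filter, Finset.mem_univ, true_and]
  exact ⟨fun h => h.2, fun h => ⟨by rw [h]; exact (Finset.mem_filter.mp hb).2, h⟩⟩

open Finset in
private lemma kvec_comp_endpoint {l m n : ℕ} (φ : IntervalHom m n) (ψ : IntervalHom l m)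
    (e : Fin (n+2)) (e' : Fin (m+2)) (e'' : Fin (l+2))
    (he : e = ⊥ ∨ e = ⊤) (he' : e' = ⊥ ∨ e' = ⊤)
    (hφ : φ.toFun e' = e) (hψ : ψ.toFun e'' = e')
    (hother : ∀ i : Fin (m+2), (i = ⊥ ∨ i = ⊤) → φ.toFun i = e → i = e') :
    kvec (φ.comp ψ) e
        = kvec ψ e' + ∑ i ∈ Finset.univ.filter
            (fun i => φ.toFun i = e ∧ i ≠ ⊥ ∧ i ≠ ⊤), kvec ψ i := by
  have hbot : (⊥ : Fin (m+2)) ≠ ⊤ := bot_ne_top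
  have hfib : (univ.filter fun b => φ.toFun b = e)
      = insert e' (univ.filter fun i => φ.toFun i = e ∧ i ≠ ⊥ ∧ i ≠ ⊤) := by
    ext b
    simp only [Finset.mem_insert, Finset.mem_filter, Finset.mem_univ, true_and]
    constructor
    · intro hb
      by_cases h1 : b = ⊥
      · left; exact hother b (Or.inl h1) hb
      by_cases h2 : b = ⊤
      · left; exact hother b (Or.inr h2) hb
      · exact Or.inr ⟨hb, h1, h2⟩
    · rintro (rfl | ⟨hb, _, _⟩)
      · exact hφ
      · exact hb
  have hne : e' ∉ (univ.filter fun i => φ.toFun i = e ∧ i ≠ ⊥ ∧ i ≠ ⊤) := by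
    intro hmem
    simp only [Finset.mem_filter, Finset.mem_univ, true_and] at hmem
    rcases he' with rfl | rfl
    · exact hmem.2.1 rfl
    · exact hmem.2.2 rfl
  have hpos : 1 ≤ (univ.filter fun i => ψ.toFun i = e').card :=
    Finset.card_pos.mpr ⟨e'', by simp [hψ]⟩
  have hsum : ∀ i ∈ (univ.filter fun i => φ.toFun i = e ∧ i ≠ ⊥ ∧ i ≠ ⊤),
      kvec ψ i = (univ.filter fun a => ψ.toFun a = i).card := by
    intro i hi
    simp only [Finset.mem_filter, Finset.mem_univ, true_and] at hi
    simp [kvec, hi.2.1, hi.2.2]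
  have hle : kvec (φ.comp ψ) e
      = (univ.filter fun i => φ.toFun (ψ.toFun i) = e).card - 1 := by
    simp [kvec, he, IntervalHom.comp]
    congr
  rw [hle, kvec_card_comp, hfib, Finset.sum_insert hne,
    Finset.sum_congr rfl hsum]
  have : kvec ψ e' = (univ.filter fun i => ψ.toFun i = e').card - 1 := by
    simp [kvec, he']
  rw [this]
  omega

/-- Composition formula for partition vectors of morphisms of `∇`. -/
theorem kvec_comp {l m n : ℕ} (φ : IntervalHom m n) (ψ : IntervalHom l m) :
    (∀ j : Fin (n + 2), j ≠ ⊥ ∧ j ≠ ⊤ →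
      kvec (φ.comp ψ) j = ∑ i ∈ Finset.univ.filter (fun i => φ.toFun i = j), kvec ψ i)
    ∧ kvec (φ.comp ψ) ⊥
        = kvec ψ ⊥ + ∑ i ∈ Finset.univ.filter
            (fun i => φ.toFun i = ⊥ ∧ i ≠ ⊥ ∧ i ≠ ⊤), kvec ψ i
    ∧ kvec (φ.comp ψ) ⊤
        = kvec ψ ⊤ + ∑ i ∈ Finset.univ.filter
            (fun i => φ.toFun i = ⊤ ∧ i ≠ ⊥ ∧ i ≠ ⊤), kvec ψ i := by
  have hbotn : (⊥ : Fin (n+2)) ≠ ⊤ := bot_ne_top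
  refine ⟨?_, ?_, ?_⟩
  · intro j ⟨hj1, hj2⟩
    have hle : kvec (φ.comp ψ) j
        = (Finset.univ.filter fun i => φ.toFun (ψ.toFun i) = j).card := by
      simp [kvec, hj1, hj2, IntervalHom.comp]
      congr
    rw [hle, kvec_card_comp]
    refine Finset.sum_congr rfl fun i hi => ?_
    simp only [Finset.mem_filter, Finset.mem_univ, true_and] at hi
    have h1 : i ≠ ⊥ := fun h => hj1 (by rw [h, φ.map_bot] at hi; exact hi.symm)
    have h2 : i ≠ ⊤ := fun h => hj2 (by rw [h, φ.map_top] at hi; exact hi.symm)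
    simp [kvec, h1, h2]
  · exact kvec_comp_endpoint φ ψ ⊥ ⊥ ⊥ (Or.inl rfl) (Or.inl rfl) φ.map_bot ψ.map_bot
      (fun i hi hφi => by
        rcases hi with rfl | rfl
        · rfl
        · rw [φ.map_top] at hφi; exact absurd hφi.symm hbotn)
  · exact kvec_comp_endpoint φ ψ ⊤ ⊤ ⊤ (Or.inr rfl) (Or.inr rfl) φ.map_top ψ.map_top
      (fun i hi hφi => by
        rcases hi with rfl | rfl
        · rw [φ.map_bot] at hφi; exact absurd hφi hbotn
        · rfl)
end
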